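/- The derived incidence structure over Z_3 of the reduced Levi graph RLG(B) (14 vertices: 7 point-classes and 7 line-classes, each class of valence 4, with the voltage assignment {a,c,d,e,f,g,q,a',c',d',e',f',g',q',t} = {1,2,1,1,1,2,1,1,2,1,1,1,2,1,0} in Z_3) is a combinatorial (21_4) configuration; in particular its Levi graph has girth at least 6 (equivalently, no two distinct points lie on two distinct common lines). -/

import Mathlib

/-- The seven symmetry classes of points (r,y,g,m,b,c,p) / lines (R,Y,G,M,B,C,P). -/
inductive Cls | R | Y | G | M | B | C | P
deriving DecidableEq

instance : Fintype Cls where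
  elems := {Cls.R, Cls.Y, Cls.G, Cls.M, Cls.B, Cls.C, Cls.P}
  complete := by intro x; cases x <;> simp

/-- Labels: a class together with an index in ℤ/3. Used both for points and lines. -/
abbrev Lbl := Cls × ZMod 3

/-- The incidence relation of B(21₄), from its incidence table:
point r_i lies on lines M_i, M_{i+1}, G_{i+1}, P_i; y_i on M_{i+2}, B_{i+1}, C_i, P_i;
g_i on B_i, C_{i+1}, R_{i+1}, P_i; m_i on Y_{i+2}, R_i, R_{i+1}, P_{i+1};
b_i on C_i, C_{i+2}, Y_{i+1}, G_i; c_i on B_i, B_{i+2}, G_{i+1}, Y_i;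
p_i on R_i, Y_i, G_i, M_{i+1} (indices mod 3). First argument: point; second: line. -/
def inc : Lbl → Lbl → Bool
  | (Cls.R, i), (Cls.M, j) => decide (j = i) || decide (j = i + 1)
  | (Cls.R, i), (Cls.G, j) => decide (j = i + 1)
  | (Cls.R, i), (Cls.P, j) => decide (j = i)
  | (Cls.Y, i), (Cls.M, j) => decide (j = i + 2)
  | (Cls.Y, i), (Cls.B, j) => decide (j = i + 1)
  | (Cls.Y, i), (Cls.C, j) => decide (j = i)
  | (Cls.Y, i), (Cls.P, j) => decide (j = i)
  | (Cls.G, i), (Cls.B, j) => decide (j = i)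
  | (Cls.G, i), (Cls.C, j) => decide (j = i + 1)
  | (Cls.G, i), (Cls.R, j) => decide (j = i + 1)
  | (Cls.G, i), (Cls.P, j) => decide (j = i)
  | (Cls.M, i), (Cls.Y, j) => decide (j = i + 2)
  | (Cls.M, i), (Cls.R, j) => decide (j = i) || decide (j = i + 1)
  | (Cls.M, i), (Cls.P, j) => decide (j = i + 1)
  | (Cls.B, i), (Cls.C, j) => decide (j = i) || decide (j = i + 2)
  | (Cls.B, i), (Cls.Y, j) => decide (j = i + 1)
  | (Cls.B, i), (Cls.G, j) => decide (j = i)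
  | (Cls.C, i), (Cls.B, j) => decide (j = i) || decide (j = i + 2)
  | (Cls.C, i), (Cls.G, j) => decide (j = i + 1)
  | (Cls.C, i), (Cls.Y, j) => decide (j = i)
  | (Cls.P, i), (Cls.R, j) => decide (j = i)
  | (Cls.P, i), (Cls.Y, j) => decide (j = i)
  | (Cls.P, i), (Cls.G, j) => decide (j = i)
  | (Cls.P, i), (Cls.M, j) => decide (j = i + 1)
  | _, _ => false

/-! The valences and the point side of the girth condition are finite checks over the
21 points and 21 lines. The line side needs no further check: a 4-cycle in a Levi graph
consists of two points and two lines, so "two points share at most one line" and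
"two lines share at most one point" are the same condition. -/

theorem card_lbl : Fintype.card Lbl = 21 := rfl

theorem card_lines_through_point (p : Lbl) :
    (Finset.univ.filter (fun l : Lbl => inc p l = true)).card = 4 := by
  revert p; decide

theorem card_points_on_line (l : Lbl) :
    (Finset.univ.filter (fun p : Lbl => inc p l = true)).card = 4 := by
  revert l; decide

theorem card_common_lines_le_one (p q : Lbl) (hpq : p ≠ q) :
    (Finset.univ.filter (fun l : Lbl => inc p l = true ∧ inc q l = true)).card ≤ 1 := by
  revert p q; decide

theorem card_common_points_le_one_of_card_common_lines_le_one {α β : Type*}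
    [Fintype α] [Fintype β] (I : α → β → Prop) [DecidableRel I]
    (h : ∀ p q, p ≠ q → (Finset.univ.filter (fun l => I p l ∧ I q l)).card ≤ 1)
    (l k : β) (hlk : l ≠ k) :
    (Finset.univ.filter (fun p => I p l ∧ I p k)).card ≤ 1 := by
  simp only [Finset.card_le_one, Finset.mem_filter, Finset.mem_univ, true_and]
  rintro p ⟨hpl, hpk⟩ q ⟨hql, hqk⟩
  by_contra hpq
  exact hlk (Finset.card_le_one.mp (h p q hpq) l (by simp [hpl, hql]) k (by simp [hpk, hqk]))

/-- the derived incidence structure over ℤ₃ of the reduced Levi graph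
RLG(B) (with voltage assignment {a,…,t} = {1,2,1,1,1,2,1,1,2,1,1,1,2,1,0}, whose
derived incidences are exactly the table encoded by `inc`) is a combinatorial (21₄)
configuration; in particular its Levi graph is bipartite with no 4-cycles: no two
distinct points lie on two distinct common lines (and dually). -/
theorem derived_RLGB_is_21_4_configuration :
    Fintype.card Lbl = 21 ∧ Fintype.card Lbl = 21 ∧
    (∀ p : Lbl, (Finset.univ.filter (fun l : Lbl => inc p l = true)).card = 4) ∧
    (∀ l : Lbl, (Finset.univ.filter (fun p : Lbl => inc p l = true)).card = 4) ∧
    (∀ p q : Lbl, p ≠ q →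
      (Finset.univ.filter (fun l : Lbl => inc p l = true ∧ inc q l = true)).card ≤ 1) ∧
    (∀ l k : Lbl, l ≠ k →
      (Finset.univ.filter (fun p : Lbl => inc p l = true ∧ inc p k = true)).card ≤ 1) := by
  exact ⟨card_lbl, card_lbl, card_lines_through_point, card_points_on_line,
    card_common_lines_le_one,
    card_common_points_le_one_of_card_common_lines_le_one (fun p l => inc p l = true)
      card_common_lines_le_one⟩
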